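/- The hyperelliptic curve with affine model y² + y = x⁵ over F_16 is nonsingular of genus 2 and has exactly 33 rational points over F_16, which is the maximum allowed by the Hasse–Weil bound 16 + 1 + 2·2·4 = 33. -/
import Mathlib

namespace CurveF16Aux

abbrev K := GaloisField 2 4

noncomputable local instance : Fintype K := Fintype.ofFinite _

lemma card_K : Fintype.card K = 16 := by
  rw [← Nat.card_eq_fintype_card, GaloisField.card 2 4 (by norm_num)]
  norm_num

lemma two_eq_zero : (2 : K) = 0 := by
  exact_mod_cast CharP.cast_eq_zero K 2

lemma pow16 (a : K) : a ^ 16 = a := by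
  have := FiniteField.pow_card a
  rwa [card_K] at this

/-- The Artin–Schreier map as an additive hom. -/
noncomputable def g : K →+ K where
  toFun y := y ^ 2 + y
  map_zero' := by ring
  map_add' a b := by
    have h := two_eq_zero
    show (a + b) ^ 2 + (a + b) = (a ^ 2 + a) + (b ^ 2 + b)
    linear_combination (a * b) * h

lemma mem_ker_iff (y : K) : y ∈ g.ker ↔ y ^ 2 + y = 0 := by
  rw [AddMonoidHom.mem_ker]; rfl

lemma card_ker_g : Nat.card g.ker = 2 := by
  have hset : (g.ker : Set K) = {0, 1} := by
    ext y
    simp only [SetLike.mem_coe, mem_ker_iff, Set.mem_insert_iff, Set.mem_singleton_iff]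
    have h2 := two_eq_zero
    constructor
    · intro h
      have hg : y * (y + 1) = 0 := by linear_combination h
      rcases mul_eq_zero.mp hg with h0 | h1
      · exact Or.inl h0
      · exact Or.inr (by linear_combination h1 - h2)
    · rintro (rfl | rfl)
      · ring
      · linear_combination h2
  have : Nat.card g.ker = Nat.card ({0, 1} : Set K) := Nat.card_congr (Equiv.setCongr hset)
  rw [this, Nat.card_coe_set_eq, Set.ncard_pair (by norm_num : (0:K) ≠ 1)]

lemma card_range_g : Nat.card g.range = 8 := by
  have h := AddSubgroup.card_eq_card_quotient_mul_card_addSubgroup g.ker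
  have hq : Nat.card (K ⧸ g.ker) = Nat.card g.range :=
    Nat.card_congr (QuotientAddGroup.quotientKerEquivRange g).toEquiv
  rw [hq, card_ker_g] at h
  have h16 : Nat.card K = 16 := by
    rw [GaloisField.card 2 4 (by norm_num)]
    norm_num
  rw [h16] at h
  omega

/-- The "trace kernel" set. -/
def R : Set K := {z | z ^ 8 + z ^ 4 + z ^ 2 + z = 0}

lemma range_subset_R : (g.range : Set K) ⊆ R := by
  rintro _ ⟨y, rfl⟩
  show (y ^ 2 + y) ^ 8 + (y ^ 2 + y) ^ 4 + (y ^ 2 + y) ^ 2 + (y ^ 2 + y) = 0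
  have h16 := pow16 y
  have h2 := two_eq_zero
  linear_combination h16 + (y + y^2 + y^3 + y^4 + 2*y^5 + 3*y^6 + 2*y^7 + y^8 + 4*y^9
    + 14*y^10 + 28*y^11 + 35*y^12 + 28*y^13 + 14*y^14 + 4*y^15) * h2

lemma ncard_R_le : R.ncard ≤ 8 := by
  classical
  set p : Polynomial K := Polynomial.X ^ 8 + Polynomial.X ^ 4 + Polynomial.X ^ 2 + Polynomial.X
    with hp
  have hpne : p ≠ 0 := by
    intro h
    have := congrArg (Polynomial.coeff · 8) h
    simp [hp, Polynomial.coeff_X_pow, Polynomial.coeff_X] at this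
  have hdeg : p.natDegree ≤ 8 := by
    rw [hp]; compute_degree
  have hsub : R ⊆ ↑p.roots.toFinset := by
    intro z hz
    simp only [Finset.mem_coe, Multiset.mem_toFinset, Polynomial.mem_roots hpne,
      Polynomial.IsRoot.def]
    simp only [hp, Polynomial.eval_add, Polynomial.eval_pow, Polynomial.eval_X]
    exact hz
  calc R.ncard ≤ (↑p.roots.toFinset : Set K).ncard := Set.ncard_le_ncard hsub (Set.toFinite _)
    _ = p.roots.toFinset.card := by rw [Set.ncard_coe_finset]
    _ ≤ Multiset.card p.roots := Multiset.toFinset_card_le _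
    _ ≤ p.natDegree := Polynomial.card_roots' p
    _ ≤ 8 := hdeg

lemma range_eq_R : (g.range : Set K) = R := by
  apply Set.eq_of_subset_of_ncard_le range_subset_R
  · have h1 : (g.range : Set K).ncard = 8 := by
      rw [← Nat.card_coe_set_eq]
      exact card_range_g
    rw [h1]
    exact ncard_R_le

lemma exists_y (x : K) : ∃ y : K, y ^ 2 + y = x ^ 5 := by
  have h2 := two_eq_zero
  have h4 : (x ^ 5) ^ 4 = x ^ 5 := by
    have h16 := pow16 x
    calc (x ^ 5) ^ 4 = x ^ 16 * x ^ 4 := by ring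
      _ = x * x ^ 4 := by rw [h16]
      _ = x ^ 5 := by ring
  have hz : x ^ 5 ∈ R := by
    show (x ^ 5) ^ 8 + (x ^ 5) ^ 4 + (x ^ 5) ^ 2 + x ^ 5 = 0
    have h8 : (x ^ 5) ^ 8 = (x ^ 5) ^ 2 := by
      calc (x ^ 5) ^ 8 = ((x ^ 5) ^ 4) ^ 2 := by ring
        _ = (x ^ 5) ^ 2 := by rw [h4]
    rw [h8, h4]
    linear_combination ((x ^ 5) ^ 2 + x ^ 5) * h2
  rw [← range_eq_R] at hz
  obtain ⟨y, hy⟩ := hz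
  exact ⟨y, hy⟩

lemma fiber_card (x : K) : Nat.card {y : K // y ^ 2 + y = x ^ 5} = 2 := by
  obtain ⟨y₀, hy₀⟩ := exists_y x
  have h2 := two_eq_zero
  have hset : {y : K | y ^ 2 + y = x ^ 5} = {y₀, y₀ + 1} := by
    ext y
    simp only [Set.mem_setOf_eq, Set.mem_insert_iff, Set.mem_singleton_iff]
    constructor
    · intro h
      have hfac : (y + y₀) * (y + y₀ + 1) = 0 := by
        linear_combination h - hy₀ + (y * y₀ + y₀ ^ 2 + y₀) * h2
      rcases mul_eq_zero.mp hfac with h0 | h1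
      · left; linear_combination h0 - y₀ * h2
      · right; linear_combination h1 - y₀ * h2 - h2
    · rintro (rfl | rfl)
      · exact hy₀
      · linear_combination hy₀ + (y₀ + 1) * h2
  have hne : y₀ ≠ y₀ + 1 := by
    intro h
    exact one_ne_zero (by linear_combination -h : (1 : K) = 0)
  calc Nat.card {y : K // y ^ 2 + y = x ^ 5}
      = ({y : K | y ^ 2 + y = x ^ 5} : Set K).ncard := Nat.card_coe_set_eq _
    _ = 2 := by rw [hset, Set.ncard_pair hne]

lemma affine_count :
    Nat.card {p : K × K // p.2 ^ 2 + p.2 = p.1 ^ 5} = 32 := by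
  classical
  have e : {p : K × K // p.2 ^ 2 + p.2 = p.1 ^ 5} ≃
      Σ x : K, {y : K // y ^ 2 + y = x ^ 5} :=
    { toFun := fun p => ⟨p.1.1, p.1.2, p.2⟩
      invFun := fun s => ⟨(s.1, s.2.1), s.2.2⟩
      left_inv := fun p => rfl
      right_inv := fun s => rfl }
  rw [Nat.card_congr e, Nat.card_eq_fintype_card, Fintype.card_sigma]
  have : ∀ x : K, Fintype.card {y : K // y ^ 2 + y = x ^ 5} = 2 := by
    intro x
    rw [← Nat.card_eq_fintype_card]
    exact fiber_card x
  simp only [this]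
  rw [Finset.sum_const, Finset.card_univ, card_K]
  norm_num

end CurveF16Aux

/-- The hyperelliptic curve `y² + y = x⁵` over `F₁₆` (a curve of genus 2) is nonsingular
(in characteristic 2 the partial derivative `∂/∂y (y²+y+x⁵) = 2y+1` never vanishes
together with `∂/∂x = 5x⁴` at a point of the curve) and has exactly `32` affine rational
points, hence `32 + 1 = 33` rational points including the point at infinity, which is the
maximum allowed by the Hasse–Weil bound `16 + 1 + 2·2·√16 = 33` for genus `g = 2`. -/
theorem curve_y2_y_x5_over_F16_maximal :
    Nat.card {p : GaloisField 2 4 × GaloisField 2 4 // p.2 ^ 2 + p.2 = p.1 ^ 5} = 32 ∧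
    (∀ x y : GaloisField 2 4, y ^ 2 + y = x ^ 5 → ¬(5 * x ^ 4 = 0 ∧ 2 * y + 1 = 0)) ∧
    32 + 1 = 16 + 1 + 2 * 2 * Nat.sqrt 16 := by
  refine ⟨CurveF16Aux.affine_count, ?_, by norm_num⟩
  intro x y _ ⟨_, hy⟩
  have h2 := CurveF16Aux.two_eq_zero
  exact one_ne_zero (by linear_combination hy - y * h2 : (1 : GaloisField 2 4) = 0)
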